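/- arXiv:1103.0727 — 3 statements merged into one kernel-verified Lean document; each statement's English description precedes it below -/
import Mathlib

section
/- Let a Lie group G act on a symplectic manifold (M, ω) by a strongly Hamiltonian, free and proper action with G-equivariant momentum map J : M → g*, and suppose C = J⁻¹(0) is nonempty. Then C is a coisotropic submanifold of M. -/
/-!
Equivariance makes `J` vanish on the whole orbit `G • p` of a point `p ∈ C = J⁻¹(0)`, so every
orbit direction `ξ_M(p)` is tangent to `C`, i.e. lies in `ker dJ_p`. If `w` is `ω`-orthogonal to
`ker dJ_p`, the momentum map identity `ω(ξ_M(p), w) = d⟨J, ξ⟩_p w` then gives `dJ_p w = 0`.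
-/

open scoped Manifold

section Differential

variable {𝕜 : Type*} [NontriviallyNormedField 𝕜]
  {E : Type*} [NormedAddCommGroup E] [NormedSpace 𝕜 E] {H : Type*} [TopologicalSpace H]
  {I : ModelWithCorners 𝕜 E H} {M : Type*} [TopologicalSpace M] [ChartedSpace H M]
  {E' : Type*} [NormedAddCommGroup E'] [NormedSpace 𝕜 E'] {H' : Type*} [TopologicalSpace H']
  {I' : ModelWithCorners 𝕜 E' H'} {M' : Type*} [TopologicalSpace M'] [ChartedSpace H' M']
  {E'' : Type*} [NormedAddCommGroup E''] [NormedSpace 𝕜 E''] {H'' : Type*} [TopologicalSpace H'']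
  {I'' : ModelWithCorners 𝕜 E'' H''} {M'' : Type*} [TopologicalSpace M''] [ChartedSpace H'' M'']

theorem mfderiv_clm_apply_const {F F' : Type*} [NormedAddCommGroup F] [NormedSpace 𝕜 F]
    [NormedAddCommGroup F'] [NormedSpace 𝕜 F'] {J : M → F →L[𝕜] F'} {p : M}
    (hJ : MDifferentiableAt I 𝓘(𝕜, F →L[𝕜] F') J p) (ξ : F) (v : TangentSpace I p) :
    mfderiv I 𝓘(𝕜, F') (fun q => J q ξ) p v
      = ContinuousLinearMap.apply 𝕜 F' ξ (mfderiv I 𝓘(𝕜, F →L[𝕜] F') J p v) := by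
  have h : HasMFDerivAt I 𝓘(𝕜, F') (fun q => J q ξ) p
      ((ContinuousLinearMap.apply 𝕜 F' ξ).comp (mfderiv I 𝓘(𝕜, F →L[𝕜] F') J p)) :=
    (ContinuousLinearMap.apply 𝕜 F' ξ).hasMFDerivAt.comp p hJ.hasMFDerivAt
  rw [h.mfderiv]
  rfl

theorem mfderiv_apply_mfderiv_eq_zero_of_comp_eq_const {f : M → M'} {g : M' → M''} {x : M}
    {y : M'} {c : M''} (hg : MDifferentiableAt I' I'' g y) (hf : MDifferentiableAt I I' f x)
    (hy : f x = y) (hc : ∀ z, g (f z) = c) (v : TangentSpace I x) :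
    mfderiv I' I'' g y (mfderiv I I' f x v) = 0 := by
  rw [← mfderiv_comp_apply_of_eq x hg hf hy, show g ∘ f = fun _ => c from funext hc,
    mfderiv_const]
  rfl

theorem ContMDiff.mdifferentiable_smul_const {G : Type*} [TopologicalSpace G]
    [ChartedSpace H G] [SMul G M'] {n : WithTop ℕ∞}
    (hact : ContMDiff (I.prod I') I' n fun q : G × M' => q.1 • q.2) (hn : n ≠ 0) (p : M') :
    MDifferentiable I I' fun g : G => g • p :=
  (hact.comp (contMDiff_id.prodMk contMDiff_const)).mdifferentiable hn

end Differential

theorem mfderiv_apply_orbit_eq_zero_of_equivariant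
    {𝕜 : Type*} [NontriviallyNormedField 𝕜]
    {EG : Type*} [NormedAddCommGroup EG] [NormedSpace 𝕜 EG]
    {HG : Type*} [TopologicalSpace HG] {IG : ModelWithCorners 𝕜 EG HG}
    {G : Type*} [TopologicalSpace G] [ChartedSpace HG G] [Monoid G]
    {E : Type*} [NormedAddCommGroup E] [NormedSpace 𝕜 E]
    {H : Type*} [TopologicalSpace H] {I : ModelWithCorners 𝕜 E H}
    {M : Type*} [TopologicalSpace M] [ChartedSpace H M] [MulAction G M]
    {V : Type*} [NormedAddCommGroup V] [NormedSpace 𝕜 V]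
    {J : M → V} {ρ : G → V →ₗ[𝕜] V} (hequiv : ∀ (g : G) (p : M), J (g • p) = ρ g (J p))
    {p : M} (hp : J p = 0) (hJ : MDifferentiableAt I 𝓘(𝕜, V) J p)
    (horbit : MDifferentiableAt IG I (fun g : G => g • p) 1) (ξ : EG) :
    mfderiv I 𝓘(𝕜, V) J p (mfderiv IG I (fun g : G => g • p) 1 ξ) = 0 :=
  mfderiv_apply_mfderiv_eq_zero_of_comp_eq_const hJ horbit (one_smul G p)
    (fun g => by rw [hequiv, hp, map_zero]) ξ

theorem stmt6_general
    {EG : Type*} [NormedAddCommGroup EG] [NormedSpace ℝ EG]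
    {HG : Type*} [TopologicalSpace HG] {IG : ModelWithCorners ℝ EG HG}
    {G : Type*} [TopologicalSpace G] [ChartedSpace HG G] [Group G]
    {E : Type*} [NormedAddCommGroup E] [NormedSpace ℝ E]
    {H : Type*} [TopologicalSpace H] {I : ModelWithCorners ℝ E H}
    {M : Type*} [TopologicalSpace M] [ChartedSpace H M]
    [MulAction G M]
    (hact : ContMDiff (IG.prod I) I (⊤ : ℕ∞) fun p : G × M => p.1 • p.2)
    (ω : ∀ p : M, TangentSpace I p →ₗ[ℝ] TangentSpace I p →ₗ[ℝ] ℝ)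
    (J : M → (EG →L[ℝ] ℝ))
    (hJd : MDifferentiable I 𝓘(ℝ, EG →L[ℝ] ℝ) J)
    (hmom : ∀ (ξ : EG) (p : M) (v : TangentSpace I p),
      ω p ((mfderiv IG I (fun g : G => g • p) (1 : G) ξ : TangentSpace I p)) v
        = (mfderiv I 𝓘(ℝ, ℝ) (fun q : M => J q ξ) p v : ℝ))
    (ρ : G → ((EG →L[ℝ] ℝ) →ₗ[ℝ] (EG →L[ℝ] ℝ)))
    (hequiv : ∀ (g : G) (p : M), J (g • p) = ρ g (J p)) :
    ∀ p : M, J p = 0 → ∀ w : TangentSpace I p,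
      (∀ v : TangentSpace I p,
          (mfderiv I 𝓘(ℝ, EG →L[ℝ] ℝ) J p v : EG →L[ℝ] ℝ) = 0 → ω p v w = 0) →
      (mfderiv I 𝓘(ℝ, EG →L[ℝ] ℝ) J p w : EG →L[ℝ] ℝ) = 0 := by
  intro p hp w hw
  refine ContinuousLinearMap.ext fun ξ => ?_
  have horbit := hact.mdifferentiable_smul_const (by simp) p 1
  have htangent := mfderiv_apply_orbit_eq_zero_of_equivariant hequiv hp (hJd p) horbit ξ
  have hpairing := hw _ htangent
  rwa [hmom, mfderiv_clm_apply_const (hJd p)] at hpairing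

theorem stmt6
    {EG : Type*} [NormedAddCommGroup EG] [NormedSpace ℝ EG] [FiniteDimensional ℝ EG]
    {HG : Type*} [TopologicalSpace HG] {IG : ModelWithCorners ℝ EG HG}
    {G : Type*} [TopologicalSpace G] [ChartedSpace HG G] [Group G] [LieGroup IG (⊤ : ℕ∞) G]
    {E : Type*} [NormedAddCommGroup E] [NormedSpace ℝ E] [FiniteDimensional ℝ E]
    {H : Type*} [TopologicalSpace H] {I : ModelWithCorners ℝ E H}
    {M : Type*} [TopologicalSpace M] [ChartedSpace H M] [IsManifold I (⊤ : ℕ∞) M]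
    [MulAction G M]
    (hact : ContMDiff (IG.prod I) I (⊤ : ℕ∞) fun p : G × M => p.1 • p.2)
    (hfree : ∀ (g : G) (p : M), g • p = p → g = 1)
    (hproper : IsProperMap fun p : G × M => (p.2, p.1 • p.2))
    (ω : ∀ p : M, TangentSpace I p →ₗ[ℝ] TangentSpace I p →ₗ[ℝ] ℝ)
    (hnd : ∀ (p : M) (w : TangentSpace I p), (∀ v : TangentSpace I p, ω p v w = 0) → w = 0)
    (halt : ∀ (p : M) (v w : TangentSpace I p), ω p v w = - ω p w v)
    (hsymp : ∀ (g : G) (p : M) (v w : TangentSpace I p),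
      ω (g • p) (mfderiv I I (fun q : M => g • q) p v) (mfderiv I I (fun q : M => g • q) p w)
        = ω p v w)
    (J : M → (EG →L[ℝ] ℝ))
    (hJd : MDifferentiable I 𝓘(ℝ, EG →L[ℝ] ℝ) J)
    (hmom : ∀ (ξ : EG) (p : M) (v : TangentSpace I p),
      ω p ((mfderiv IG I (fun g : G => g • p) (1 : G) ξ : TangentSpace I p)) v
        = (mfderiv I 𝓘(ℝ, ℝ) (fun q : M => J q ξ) p v : ℝ))
    (ρ : G → ((EG →L[ℝ] ℝ) →ₗ[ℝ] (EG →L[ℝ] ℝ)))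
    (hρone : ρ 1 = LinearMap.id)
    (hρmul : ∀ g h : G, ρ (g * h) = (ρ g).comp (ρ h))
    (hequiv : ∀ (g : G) (p : M), J (g • p) = ρ g (J p))
    (hne : ∃ p : M, J p = 0) :
    ∀ p : M, J p = 0 → ∀ w : TangentSpace I p,
      (∀ v : TangentSpace I p,
          (mfderiv I 𝓘(ℝ, EG →L[ℝ] ℝ) J p v : EG →L[ℝ] ℝ) = 0 → ω p v w = 0) →
      (mfderiv I 𝓘(ℝ, EG →L[ℝ] ℝ) J p w : EG →L[ℝ] ℝ) = 0 :=
  stmt6_general hact ω J hJd hmom ρ hequiv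
end

section
/- Let g be a Lie algebra over a commutative ring R containing ℚ, V an R-module, and ρ : g → End(V) a Lie algebra representation. Then the Chevalley–Eilenberg boundary operator ∂ on V ⊗ Λ•g, defined by ∂(v ⊗ ξ₁∧…∧ξₙ) = Σ_j (−1)^{j+1} ρ(ξ_j)v ⊗ ξ₁∧…∧ξ̂_j∧…∧ξₙ + Σ_{i<j} (−1)^{i+j−1} v ⊗ [ξ_i,ξ_j]∧ξ₁∧…∧ξ̂_i∧…∧ξ̂_j∧…∧ξₙ, satisfies ∂² = 0. -/
open scoped TensorProduct

attribute [local instance 100] LieRing.ofAssociativeRing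

/-!
Following Cartan, write `εₓ` for left exterior multiplication by `x` on `V ⊗ Λ L` and
`Lₓ = ρ(x) ⊗ 1 + 1 ⊗ θₓ` for the diagonal action, `θₓ` being the derivation of `Λ L`
extending `ad x`. A direct computation on monomials gives `∂ εₓ + εₓ ∂ = Lₓ`. Since
`x ↦ Lₓ` is a representation and `[Lₓ, ε_y] = ε_[x,y]`, induction on the degree shows that
`∂` commutes with every `Lₓ`, and then
`∂² ε_y = ∂ L_y - ∂ ε_y ∂ = L_y ∂ - L_y ∂ + ε_y ∂² = ε_y ∂²`, which vanishes by induction.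
-/

open ExteriorAlgebra TensorProduct

namespace ExteriorAlgebra

variable {R : Type*} [CommRing R] {L : Type*} [LieRing L] [LieAlgebra R L]

theorem span_range_listProd_ι :
    Submodule.span R (Set.range fun l : List L => (l.map (ι R)).prod) = ⊤ := by
  rw [eq_top_iff]
  rintro a -
  induction a using ExteriorAlgebra.induction with
  | algebraMap r =>
    rw [Algebra.algebraMap_eq_smul_one]
    exact Submodule.smul_mem _ _ (Submodule.subset_span ⟨[], List.prod_nil⟩)
  | ι y => exact Submodule.subset_span ⟨[y], by simp⟩
  | add a b ha hb => exact add_mem ha hb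
  | mul a b ha hb =>
    have h := Submodule.mul_mem_mul ha hb
    rw [Submodule.span_mul_span] at h
    refine Submodule.span_le.mpr ?_ h
    rintro _ ⟨_, ⟨l₁, rfl⟩, _, ⟨l₂, rfl⟩, rfl⟩
    exact Submodule.subset_span ⟨l₁ ++ l₂, by simp⟩

theorem ι_mul_ι_comm (x y : L) : ι R x * ι R y = -(ι R y * ι R x) :=
  eq_neg_of_add_eq_zero_left (ι_add_mul_swap x y)

theorem ι_mul_ι_mul_comm (x y : L) (a : ExteriorAlgebra R L) :
    ι R x * (ι R y * a) = -(ι R y * (ι R x * a)) := by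
  rw [← mul_assoc, ← mul_assoc, ι_mul_ι_comm, neg_mul]

/-- `a ↦ a + ε θₓ a`, where `θₓ` is the derivation of `Λ L` extending `ad x`. -/
def adDualNumber (x : L) :
    ExteriorAlgebra R L →ₐ[R] TrivSqZeroExt (ExteriorAlgebra R L) (ExteriorAlgebra R L) :=
  lift R
    ⟨{ toFun y := .inl (ι R y) + .inr (ι R ⁅x, y⁆)
       map_add' y z := by ext <;> simp
       map_smul' r y := by ext <;> simp },
    fun y => by ext <;> simp [TrivSqZeroExt.fst_mul, TrivSqZeroExt.snd_mul, ι_add_mul_swap]⟩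

theorem adDualNumber_ι (x y : L) :
    adDualNumber x (ι R y) = .inl (ι R y) + .inr (ι R ⁅x, y⁆) := by
  simp [adDualNumber]

theorem fst_adDualNumber (x : L) (a : ExteriorAlgebra R L) : (adDualNumber x a).fst = a := by
  have h : (TrivSqZeroExt.fstHom R _ _).comp (adDualNumber x) = AlgHom.id R _ :=
    hom_ext <| LinearMap.ext fun y => by simp [adDualNumber_ι]
  exact AlgHom.congr_fun h a

def adDeriv (x : L) : ExteriorAlgebra R L →ₗ[R] ExteriorAlgebra R L where
  toFun a := (adDualNumber x a).snd
  map_add' a b := by simp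
  map_smul' r a := by simp

theorem adDeriv_ι (x y : L) : adDeriv x (ι R y) = ι R ⁅x, y⁆ := by
  simp [adDeriv, adDualNumber_ι]

theorem adDualNumber_apply (x : L) (a : ExteriorAlgebra R L) :
    adDualNumber x a = .inl a + .inr (adDeriv x a) := by
  ext <;> simp [fst_adDualNumber, adDeriv]

theorem adDeriv_one (x : L) : adDeriv (R := R) x 1 = 0 := by
  simp [adDeriv]

theorem adDeriv_ι_mul (x y : L) (a : ExteriorAlgebra R L) :
    adDeriv x (ι R y * a) = ι R ⁅x, y⁆ * a + ι R y * adDeriv x a := by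
  have h := congrArg TrivSqZeroExt.snd (map_mul (adDualNumber (R := R) x) (ι R y) a)
  simpa [adDualNumber_ι, adDualNumber_apply, adDeriv_ι, TrivSqZeroExt.snd_mul, add_comm] using h

theorem adDeriv_listProd (x : L) (m : List L) :
    adDeriv x (m.map (ι R)).prod =
      ∑ j ∈ Finset.range m.length, (-1 : ℤ) ^ j •
        (ι R ⁅x, m.getD j 0⁆ * ((m.eraseIdx j).map (ι R)).prod) := by
  induction m with
  | nil => simp [adDeriv_one]
  | cons y m ih =>
    simp only [List.map_cons, List.prod_cons, adDeriv_ι_mul, ih, Finset.mul_sum,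
      List.length_cons, Finset.sum_range_succ', List.getD_cons_succ, List.getD_cons_zero,
      List.eraseIdx_cons_succ, List.eraseIdx_cons_zero, pow_zero, one_smul, add_comm]
    congr 1
    refine Finset.sum_congr rfl fun j _ => ?_
    rw [mul_smul_comm, ← mul_assoc, ← mul_assoc, ι_mul_ι_comm, pow_succ, mul_neg_one, neg_smul,
      neg_mul, ← smul_neg]

theorem adDeriv_lie (x y : L) :
    adDeriv (R := R) ⁅x, y⁆ = adDeriv x ∘ₗ adDeriv y - adDeriv y ∘ₗ adDeriv x := by
  refine LinearMap.ext_on span_range_listProd_ι ?_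
  rintro _ ⟨m, rfl⟩
  induction m with
  | nil => simp [adDeriv_one]
  | cons z m ih =>
    simp only [List.map_cons, List.prod_cons, LinearMap.sub_apply, LinearMap.comp_apply] at ih ⊢
    simp only [adDeriv_ι_mul, map_add, ih, lie_lie, map_sub, sub_mul, mul_sub]
    abel

end ExteriorAlgebra

namespace ChevalleyEilenberg

variable {R : Type*} [CommRing R] {L : Type*} [LieRing L] [LieAlgebra R L]
  {V : Type*} [AddCommGroup V] [Module R V]

theorem tensor_ext {P : Type*} [AddCommGroup P] [Module R P]
    {f g : V ⊗[R] ExteriorAlgebra R L →ₗ[R] P}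
    (h : ∀ (v : V) (l : List L), f (v ⊗ₜ (l.map (ι R)).prod) = g (v ⊗ₜ (l.map (ι R)).prod)) :
    f = g :=
  TensorProduct.ext <| LinearMap.ext fun v =>
    LinearMap.ext_on span_range_listProd_ι <| by
      rintro _ ⟨l, rfl⟩
      exact h v l

variable (V) in
def wedge (x : L) : V ⊗[R] ExteriorAlgebra R L →ₗ[R] V ⊗[R] ExteriorAlgebra R L :=
  (LinearMap.mulLeft R (ι R x)).lTensor V

def lieDerivative (ρ : L →ₗ⁅R⁆ Module.End R V) (x : L) :
    V ⊗[R] ExteriorAlgebra R L →ₗ[R] V ⊗[R] ExteriorAlgebra R L :=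
  (ρ x).rTensor _ + (adDeriv x).lTensor V

@[simp]
theorem wedge_tmul (x : L) (v : V) (a : ExteriorAlgebra R L) :
    wedge V x (v ⊗ₜ a) = v ⊗ₜ (ι R x * a) := rfl

@[simp]
theorem lieDerivative_tmul (ρ : L →ₗ⁅R⁆ Module.End R V) (x : L) (v : V)
    (a : ExteriorAlgebra R L) :
    lieDerivative ρ x (v ⊗ₜ a) = ρ x v ⊗ₜ a + v ⊗ₜ adDeriv x a := rfl

variable (ρ : L →ₗ⁅R⁆ Module.End R V)

theorem lieDerivative_wedge (x y : L) (u : V ⊗[R] ExteriorAlgebra R L) :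
    lieDerivative ρ x (wedge V y u) = wedge V y (lieDerivative ρ x u) + wedge V ⁅x, y⁆ u := by
  induction u using TensorProduct.induction_on with
  | zero => simp
  | tmul v a =>
    simp only [wedge_tmul, lieDerivative_tmul, adDeriv_ι_mul, tmul_add, map_add]
    abel
  | add u w hu hw => simp only [map_add, hu, hw]; abel

theorem lieDerivative_lie (x y : L) (u : V ⊗[R] ExteriorAlgebra R L) :
    lieDerivative ρ ⁅x, y⁆ u =
      lieDerivative ρ x (lieDerivative ρ y u) - lieDerivative ρ y (lieDerivative ρ x u) := by
  induction u using TensorProduct.induction_on with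
  | zero => simp
  | tmul v a =>
    simp only [lieDerivative_tmul, LieHom.map_lie, LieHom.lie_apply, Module.End.lie_apply,
      sub_tmul, adDeriv_lie, LinearMap.sub_apply, LinearMap.comp_apply, tmul_sub, map_add]
    abel
  | add u w hu hw => simp only [map_add, hu, hw]; abel

def rhoTerm (v : V) (l : List L) : V ⊗[R] ExteriorAlgebra R L :=
  ∑ j ∈ Finset.range l.length,
    (-1 : ℤ) ^ j • (ρ (l.getD j 0) v ⊗ₜ[R] ((l.eraseIdx j).map (ι R)).prod)

variable (R) in
def bracketTerm (v : V) (l : List L) : V ⊗[R] ExteriorAlgebra R L :=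
  ∑ j ∈ Finset.range l.length, ∑ i ∈ Finset.range j,
    (-1 : ℤ) ^ (i + j + 1) • (v ⊗ₜ[R]
      (ι R ⁅l.getD i 0, l.getD j 0⁆ * (((l.eraseIdx j).eraseIdx i).map (ι R)).prod))

def IsBoundary (D : V ⊗[R] ExteriorAlgebra R L →ₗ[R] V ⊗[R] ExteriorAlgebra R L) : Prop :=
  ∀ (v : V) (l : List L), D (v ⊗ₜ (l.map (ι R)).prod) = rhoTerm ρ v l + bracketTerm R v l

theorem rhoTerm_cons (v : V) (x : L) (m : List L) :
    rhoTerm ρ v (x :: m) = ρ x v ⊗ₜ (m.map (ι R)).prod - wedge V x (rhoTerm ρ v m) := by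
  simp only [rhoTerm, List.length_cons, Finset.sum_range_succ', List.getD_cons_succ,
    List.getD_cons_zero, List.eraseIdx_cons_succ, List.eraseIdx_cons_zero, List.map_cons,
    List.prod_cons, pow_succ, pow_zero, one_smul, map_sum, map_zsmul, wedge_tmul, mul_neg_one,
    neg_smul, Finset.sum_neg_distrib]
  abel

theorem bracketTerm_cons (v : V) (x : L) (m : List L) :
    bracketTerm R v (x :: m) =
      v ⊗ₜ adDeriv x (m.map (ι R)).prod - wedge V x (bracketTerm R v m) := by
  simp only [bracketTerm, adDeriv_listProd, List.length_cons, Finset.sum_range_succ',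
    List.getD_cons_succ, List.getD_cons_zero, List.eraseIdx_cons_succ, List.eraseIdx_cons_zero,
    List.map_cons, List.prod_cons, Finset.range_zero, Finset.sum_empty, zero_add, map_sum,
    map_zsmul, wedge_tmul, tmul_sum, tmul_smul]
  have hsign_add : ∀ i j : ℕ, (-1 : ℤ) ^ (i + 1 + (j + 1) + 1) = (-1) ^ (i + j + 1) :=
    fun i j => by ring
  have hsign_succ_succ : ∀ j : ℕ, (-1 : ℤ) ^ (j + 1 + 1) = (-1) ^ j := fun j => by ring
  simp only [hsign_add, hsign_succ_succ, ι_mul_ι_mul_comm _ x, tmul_neg, smul_neg,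
    Finset.sum_neg_distrib, Finset.sum_add_distrib, add_zero]
  abel

namespace IsBoundary

variable {ρ} {D : V ⊗[R] ExteriorAlgebra R L →ₗ[R] V ⊗[R] ExteriorAlgebra R L}
  (hD : IsBoundary ρ D)
include hD

theorem apply_tmul_one (v : V) : D (v ⊗ₜ 1) = 0 := by
  simpa [rhoTerm, bracketTerm] using hD v []

/-- Cartan's formula `∂ ∘ εₓ + εₓ ∘ ∂ = Lₓ`. -/
theorem apply_wedge (x : L) (u : V ⊗[R] ExteriorAlgebra R L) :
    D (wedge V x u) = lieDerivative ρ x u - wedge V x (D u) := by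
  suffices D ∘ₗ wedge V x + wedge V x ∘ₗ D = lieDerivative ρ x by
    rw [← this]
    simp
  refine tensor_ext fun v m => ?_
  have hcons : ι R x * (m.map (ι R)).prod = ((x :: m).map (ι R)).prod := rfl
  simp only [LinearMap.add_apply, LinearMap.comp_apply, wedge_tmul, lieDerivative_tmul, hcons,
    hD v, rhoTerm_cons, bracketTerm_cons, map_add]
  abel

theorem apply_lieDerivative (x : L) (u : V ⊗[R] ExteriorAlgebra R L) :
    D (lieDerivative ρ x u) = lieDerivative ρ x (D u) := by
  suffices D ∘ₗ lieDerivative ρ x = lieDerivative ρ x ∘ₗ D from LinearMap.congr_fun this u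
  refine tensor_ext fun v m => ?_
  induction m generalizing x with
  | nil => simp [adDeriv_one, hD.apply_tmul_one]
  | cons y m ih =>
    have hcons : v ⊗ₜ ((y :: m).map (ι R)).prod = wedge V y (v ⊗ₜ (m.map (ι R)).prod) := rfl
    simp only [LinearMap.comp_apply] at ih ⊢
    rw [hcons, lieDerivative_wedge, map_add, hD.apply_wedge, hD.apply_wedge, ih,
      lieDerivative_lie, hD.apply_wedge, map_sub, lieDerivative_wedge]
    abel

theorem comp_self : D ∘ₗ D = 0 := by
  refine tensor_ext fun v m => ?_
  induction m with
  | nil => simp [hD.apply_tmul_one]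
  | cons y m ih =>
    have hcons : v ⊗ₜ ((y :: m).map (ι R)).prod = wedge V y (v ⊗ₜ (m.map (ι R)).prod) := rfl
    simp only [LinearMap.comp_apply, LinearMap.zero_apply] at ih ⊢
    rw [hcons, hD.apply_wedge, map_sub, hD.apply_wedge, hD.apply_lieDerivative, ih, map_zero]
    abel

end IsBoundary

end ChevalleyEilenberg

theorem stmt10_general {R : Type*} [CommRing R]
    {L : Type*} [LieRing L] [LieAlgebra R L]
    {V : Type*} [AddCommGroup V] [Module R V]
    (ρ : L →ₗ⁅R⁆ Module.End R V)
    (D : (V ⊗[R] ExteriorAlgebra R L) →ₗ[R] (V ⊗[R] ExteriorAlgebra R L))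
    (hD : ∀ (v : V) (l : List L),
      D (v ⊗ₜ[R] (l.map fun x => ExteriorAlgebra.ι R x).prod) =
        (∑ j ∈ Finset.range l.length,
          (-1 : ℤ) ^ j • ((ρ (l.getD j 0) v) ⊗ₜ[R]
            ((l.eraseIdx j).map fun x => ExteriorAlgebra.ι R x).prod))
        + ∑ j ∈ Finset.range l.length, ∑ i ∈ Finset.range j,
            (-1 : ℤ) ^ (i + j + 1) • (v ⊗ₜ[R]
              (ExteriorAlgebra.ι R ⁅l.getD i 0, l.getD j 0⁆ *
                (((l.eraseIdx j).eraseIdx i).map fun x => ExteriorAlgebra.ι R x).prod))) :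
    D ∘ₗ D = 0 :=
  ChevalleyEilenberg.IsBoundary.comp_self (ρ := ρ) hD

theorem stmt10 {R : Type*} [CommRing R] [Algebra ℚ R]
    {L : Type*} [LieRing L] [LieAlgebra R L]
    {V : Type*} [AddCommGroup V] [Module R V]
    (ρ : L →ₗ⁅R⁆ Module.End R V)
    (D : (V ⊗[R] ExteriorAlgebra R L) →ₗ[R] (V ⊗[R] ExteriorAlgebra R L))
    (hD : ∀ (v : V) (l : List L),
      D (v ⊗ₜ[R] (l.map fun x => ExteriorAlgebra.ι R x).prod) =
        (∑ j ∈ Finset.range l.length,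
          (-1 : ℤ) ^ j • ((ρ (l.getD j 0) v) ⊗ₜ[R]
            ((l.eraseIdx j).map fun x => ExteriorAlgebra.ι R x).prod))
        + ∑ j ∈ Finset.range l.length, ∑ i ∈ Finset.range j,
            (-1 : ℤ) ^ (i + j + 1) • (v ⊗ₜ[R]
              (ExteriorAlgebra.ι R ⁅l.getD i 0, l.getD j 0⁆ *
                (((l.eraseIdx j).eraseIdx i).map fun x => ExteriorAlgebra.ι R x).prod))) :
    D ∘ₗ D = 0 :=
  stmt10_general ρ D hD
end

section
/- Let π : E → M be a vector bundle of fiber dimension k > 0 and suppose s₁, …, sₙ ∈ Γ∞(E) are smooth sections whose values span each fiber: span_ℝ{s₁(p), …, sₙ(p)} = E_p for all p ∈ M. Then s₁, …, sₙ generate Γ∞(E) as a C∞(M)-module: every smooth section s can be written s = Σᵢ fᵢ sᵢ with fᵢ ∈ C∞(M). -/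
/-!
At a point `q`, among the coefficient vectors `c ∈ ℝⁿ` with `∑ i, c i • s i q = t q` there is a
unique one orthogonal to the relations `{c | ∑ i, c i • s i q = 0}`, the one of least norm. Being
intrinsic, this choice defines coefficient functions globally. In a local trivialization the map
`c ↦ ∑ i, c i • s i q` becomes a surjective linear map `C q` depending smoothly on `q`, and the
least-norm preimage of `v` is `(C q)* ((C q) (C q)*)⁻¹ v`, which is smooth in `q` because inversion
of operators is smooth.
-/

open scoped Manifold
open Bundle Function Module

namespace ContinuousLinearMap

section MinNormPreimage

variable {𝕜 E G G' : Type*} [RCLike 𝕜]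
  [NormedAddCommGroup E] [InnerProductSpace 𝕜 E] [CompleteSpace E]
  [NormedAddCommGroup G] [InnerProductSpace 𝕜 G] [CompleteSpace G]
  [NormedAddCommGroup G'] [InnerProductSpace 𝕜 G'] [CompleteSpace G']

/-- For surjective `C`, the preimage of `v` orthogonal to `ker C`. -/
noncomputable def minNormPreimage (C : E →L[𝕜] G) (v : G) : E :=
  adjoint C (Ring.inverse (C ∘L adjoint C) v)

theorem isUnit_comp_adjoint [FiniteDimensional 𝕜 G] {C : E →L[𝕜] G} (hC : Surjective C) :
    IsUnit (C ∘L adjoint C) := by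
  have hinj : Injective (C ∘L adjoint C) := by
    rw [← coe_coe, ← LinearMap.ker_eq_bot, ker_self_comp_adjoint, ← orthogonal_range,
      LinearMap.range_eq_top.mpr hC, Submodule.top_orthogonal_eq_bot]
  exact isUnit_iff_bijective.mpr ⟨hinj, LinearMap.injective_iff_surjective.mp hinj⟩

theorem apply_minNormPreimage [FiniteDimensional 𝕜 G] {C : E →L[𝕜] G} (hC : Surjective C)
    (v : G) : C (C.minNormPreimage v) = v := by
  change (C ∘L adjoint C * Ring.inverse (C ∘L adjoint C)) v = v
  rw [Ring.mul_inverse_cancel _ (isUnit_comp_adjoint hC)]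
  rfl

theorem minNormPreimage_mem_orthogonal_ker (C : E →L[𝕜] G) (v : G) :
    C.minNormPreimage v ∈ (C.ker)ᗮ := by
  intro u hu
  rw [minNormPreimage, adjoint_inner_right, show C u = 0 from hu, inner_zero_left]

theorem minNormPreimage_eq_of_ker_eq [FiniteDimensional 𝕜 G] [FiniteDimensional 𝕜 G']
    {C : E →L[𝕜] G} {C' : E →L[𝕜] G'} (hC : Surjective C) (hC' : Surjective C')
    (hker : C.ker = C'.ker) {y : E} :
    C.minNormPreimage (C y) = C'.minNormPreimage (C' y) := by
  have hC_ker : C.minNormPreimage (C y) - y ∈ C.ker := by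
    simp [apply_minNormPreimage hC]
  have hC'_ker : C'.minNormPreimage (C' y) - y ∈ C.ker := by
    simp [hker, apply_minNormPreimage hC']
  rw [← sub_eq_zero, ← Submodule.mem_bot 𝕜, ← C.ker.inf_orthogonal_eq_bot]
  refine ⟨by simpa using sub_mem hC_ker hC'_ker, sub_mem ?_ ?_⟩
  · exact C.minNormPreimage_mem_orthogonal_ker _
  · exact hker ▸ C'.minNormPreimage_mem_orthogonal_ker _

end MinNormPreimage

section Smoothness

variable {E G : Type*}
  [NormedAddCommGroup E] [InnerProductSpace ℝ E] [CompleteSpace E]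
  [NormedAddCommGroup G] [InnerProductSpace ℝ G] [CompleteSpace G]

theorem isBoundedLinearMap_adjoint :
    IsBoundedLinearMap ℝ (adjoint : (E →L[ℝ] G) → G →L[ℝ] E) :=
  IsLinearMap.with_bound ⟨map_add adjoint, fun c A => by simp⟩ 1 fun A => by simp

variable {EM HM M : Type*} [NormedAddCommGroup EM] [NormedSpace ℝ EM] [TopologicalSpace HM]
  {I : ModelWithCorners ℝ EM HM} [TopologicalSpace M] [ChartedSpace HM M]
  {n : WithTop ℕ∞} {C : M → E →L[ℝ] G} {v : M → G} {x : M}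

theorem _root_.ContMDiffAt.minNormPreimage [FiniteDimensional ℝ G]
    (hC : ContMDiffAt I 𝓘(ℝ, E →L[ℝ] G) n C x) (hv : ContMDiffAt I 𝓘(ℝ, G) n v x)
    (hsurj : Surjective (C x)) :
    ContMDiffAt I 𝓘(ℝ, E) n (fun y => (C y).minNormPreimage (v y)) x := by
  have hCadj : ContMDiffAt I 𝓘(ℝ, G →L[ℝ] E) n (fun y => adjoint (C y)) x :=
    isBoundedLinearMap_adjoint.contDiff.contMDiff.contMDiffAt.comp x hC
  obtain ⟨u, hu⟩ := isUnit_comp_adjoint hsurj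
  have hinv : ContMDiffAt 𝓘(ℝ, G →L[ℝ] G) 𝓘(ℝ, G →L[ℝ] G) n Ring.inverse (C x ∘L adjoint (C x)) :=
    hu ▸ (contDiffAt_ringInverse ℝ u).contMDiffAt
  exact hCadj.clm_apply ((hinv.comp x (hC.clm_comp hCadj)).clm_apply hv)

end Smoothness

end ContinuousLinearMap

namespace Bundle.Trivialization

variable {B F ι : Type*} [Fintype ι] [TopologicalSpace B]
  [NormedAddCommGroup F] [NormedSpace ℝ F] [FiniteDimensional ℝ F]
  {V : B → Type*} [TopologicalSpace (TotalSpace F V)] [∀ p, AddCommGroup (V p)]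
  [∀ p, Module ℝ (V p)] {s : ι → ∀ p, V p} {q : B}

section IsLinear

variable (e : Trivialization F (π F V)) [e.IsLinear ℝ]

variable (s) in

/-- `c ↦ ∑ i, c i • s i q`, read in the trivialization `e` and in Euclidean coordinates on `F`. -/
noncomputable def coeffMap (q : B) :
    EuclideanSpace ℝ ι →L[ℝ] EuclideanSpace ℝ (Fin (finrank ℝ F)) :=
  ∑ i, (EuclideanSpace.proj i).smulRight (toEuclidean (e ⟨q, s i q⟩).2)

variable (s) in
noncomputable def minNormCoeff (w : V q) : EuclideanSpace ℝ ι :=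
  (e.coeffMap s q).minNormPreimage (toEuclidean (e ⟨q, w⟩).2)

variable {e}

theorem coeffMap_apply (hq : q ∈ e.baseSet) (c : EuclideanSpace ℝ ι) :
    e.coeffMap s q c = toEuclidean (e.linearEquivAt ℝ q hq (∑ i, c i • s i q)) := by
  simp [coeffMap, linearEquivAt_apply]

theorem coeffMap_eq_zero_iff (hq : q ∈ e.baseSet) (c : EuclideanSpace ℝ ι) :
    e.coeffMap s q c = 0 ↔ ∑ i, c i • s i q = 0 := by
  rw [coeffMap_apply hq, ContinuousLinearEquiv.map_eq_zero_iff, LinearEquiv.map_eq_zero_iff]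

theorem surjective_coeffMap (hq : q ∈ e.baseSet)
    (hspan : Submodule.span ℝ (Set.range fun i => s i q) = ⊤) :
    Surjective (e.coeffMap s q) := by
  intro v
  obtain ⟨c, hc⟩ := (Submodule.mem_span_range_iff_exists_fun ℝ).mp
    (hspan ▸ Submodule.mem_top : (e.linearEquivAt ℝ q hq).symm (toEuclidean.symm v) ∈ _)
  refine ⟨WithLp.toLp 2 c, ?_⟩
  rw [coeffMap_apply hq]
  simp only [hc, LinearEquiv.apply_symm_apply, ContinuousLinearEquiv.apply_symm_apply]

theorem sum_minNormCoeff_smul (hq : q ∈ e.baseSet)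
    (hspan : Submodule.span ℝ (Set.range fun i => s i q) = ⊤) (w : V q) :
    ∑ i, e.minNormCoeff s w i • s i q = w := by
  have h := (e.coeffMap s q).apply_minNormPreimage (surjective_coeffMap hq hspan)
    (toEuclidean (e ⟨q, w⟩).2)
  rw [← minNormCoeff, coeffMap_apply hq, ← linearEquivAt_apply (R := ℝ) e q hq] at h
  exact (e.linearEquivAt ℝ q hq).injective (toEuclidean.injective h)

theorem minNormCoeff_eq {e' : Trivialization F (π F V)} [e'.IsLinear ℝ] (hq : q ∈ e.baseSet)
    (hq' : q ∈ e'.baseSet) (hspan : Submodule.span ℝ (Set.range fun i => s i q) = ⊤) (w : V q) :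
    e.minNormCoeff s w = e'.minNormCoeff s w := by
  obtain ⟨c, hc⟩ := (Submodule.mem_span_range_iff_exists_fun ℝ).mp
    (hspan ▸ Submodule.mem_top : w ∈ _)
  have hrepr : ∀ (e₀ : Trivialization F (π F V)) [e₀.IsLinear ℝ], q ∈ e₀.baseSet →
      toEuclidean (e₀ ⟨q, w⟩).2 = e₀.coeffMap s q (WithLp.toLp 2 c) := by
    intro e₀ _ hq₀
    rw [coeffMap_apply hq₀, linearEquivAt_apply]
    simp only [hc]
  rw [minNormCoeff, minNormCoeff, hrepr e hq, hrepr e' hq']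
  refine ContinuousLinearMap.minNormPreimage_eq_of_ker_eq
    (surjective_coeffMap hq hspan) (surjective_coeffMap hq' hspan) ?_
  ext c
  simp only [LinearMap.mem_ker, ContinuousLinearMap.coe_coe, coeffMap_eq_zero_iff hq,
    coeffMap_eq_zero_iff hq']

end IsLinear

variable {EB HB : Type*} [NormedAddCommGroup EB] [NormedSpace ℝ EB] [TopologicalSpace HB]
  {IB : ModelWithCorners ℝ EB HB} [ChartedSpace HB B] [∀ p, TopologicalSpace (V p)]
  [FiberBundle F V] [VectorBundle ℝ F V] {n : WithTop ℕ∞} [ContMDiffVectorBundle n F V IB]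
  {e : Trivialization F (π F V)} [MemTrivializationAtlas e]

theorem contMDiffAt_coeffMap (hq : q ∈ e.baseSet)
    (hs : ∀ i, ContMDiffAt IB (IB.prod 𝓘(ℝ, F)) n (fun p => TotalSpace.mk' F p (s i p)) q) :
    ContMDiffAt IB 𝓘(ℝ, EuclideanSpace ℝ ι →L[ℝ] EuclideanSpace ℝ (Fin (finrank ℝ F))) n
      (e.coeffMap s) q :=
  contMDiffAt_finsetSum fun i _ =>
    ((ContinuousLinearMap.smulRightL ℝ _ _ (EuclideanSpace.proj i)).contMDiff.contMDiffAt).comp q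
      (toEuclidean.contDiff.contMDiff.contMDiffAt.comp q ((e.contMDiffAt_section_iff hq).mp (hs i)))

theorem contMDiffAt_minNormCoeff {t : ∀ p, V p} (hq : q ∈ e.baseSet)
    (hs : ∀ i, ContMDiffAt IB (IB.prod 𝓘(ℝ, F)) n (fun p => TotalSpace.mk' F p (s i p)) q)
    (hspan : Submodule.span ℝ (Set.range fun i => s i q) = ⊤)
    (ht : ContMDiffAt IB (IB.prod 𝓘(ℝ, F)) n (fun p => TotalSpace.mk' F p (t p)) q) :
    ContMDiffAt IB 𝓘(ℝ, EuclideanSpace ℝ ι) n (fun p => e.minNormCoeff s (t p)) q :=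
  (contMDiffAt_coeffMap hq hs).minNormPreimage
    (toEuclidean.contDiff.contMDiff.contMDiffAt.comp q ((e.contMDiffAt_section_iff hq).mp ht))
    (surjective_coeffMap hq hspan)

end Bundle.Trivialization

namespace Bundle

variable {B F ι : Type*} [Fintype ι] [TopologicalSpace B]
  [NormedAddCommGroup F] [NormedSpace ℝ F] [FiniteDimensional ℝ F]
  {V : B → Type*} [TopologicalSpace (TotalSpace F V)] [∀ p, AddCommGroup (V p)]
  [∀ p, Module ℝ (V p)] [∀ p, TopologicalSpace (V p)] [FiberBundle F V] [VectorBundle ℝ F V]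
  {s : ι → ∀ p, V p} {q : B}

variable (F s) in
noncomputable def minNormCoeff (w : V q) : EuclideanSpace ℝ ι :=
  (trivializationAt F V q).minNormCoeff s w

theorem sum_minNormCoeff_smul (hspan : Submodule.span ℝ (Set.range fun i => s i q) = ⊤)
    (w : V q) : ∑ i, minNormCoeff F s w i • s i q = w :=
  Trivialization.sum_minNormCoeff_smul (FiberBundle.mem_baseSet_trivializationAt' q) hspan w

variable {EB HB : Type*} [NormedAddCommGroup EB] [NormedSpace ℝ EB] [TopologicalSpace HB]
  {IB : ModelWithCorners ℝ EB HB} [ChartedSpace HB B] {n : WithTop ℕ∞}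
  [ContMDiffVectorBundle n F V IB]

theorem contMDiffAt_minNormCoeff {t : ∀ p, V p} {x : B}
    (hs : ∀ i, ContMDiffAt IB (IB.prod 𝓘(ℝ, F)) n (fun p => TotalSpace.mk' F p (s i p)) x)
    (hspan : ∀ p, Submodule.span ℝ (Set.range fun i => s i p) = ⊤)
    (ht : ContMDiffAt IB (IB.prod 𝓘(ℝ, F)) n (fun p => TotalSpace.mk' F p (t p)) x) :
    ContMDiffAt IB 𝓘(ℝ, EuclideanSpace ℝ ι) n (fun p => minNormCoeff F s (t p)) x := by
  have hx : x ∈ (trivializationAt F V x).baseSet := FiberBundle.mem_baseSet_trivializationAt' x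
  refine (Trivialization.contMDiffAt_minNormCoeff hx hs (hspan x) ht).congr_of_eventuallyEq ?_
  filter_upwards [(trivializationAt F V x).open_baseSet.mem_nhds hx] with p hp
  exact Trivialization.minNormCoeff_eq (FiberBundle.mem_baseSet_trivializationAt' p) hp
    (hspan p) (t p)

end Bundle

theorem stmt19_general
    {EB : Type*} [NormedAddCommGroup EB] [NormedSpace ℝ EB]
    {HB : Type*} [TopologicalSpace HB] {I : ModelWithCorners ℝ EB HB}
    {M : Type*} [TopologicalSpace M] [ChartedSpace HB M]
    {F : Type*} [NormedAddCommGroup F] [NormedSpace ℝ F]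
    {V : M → Type*} [TopologicalSpace (Bundle.TotalSpace F V)]
    [∀ p, AddCommGroup (V p)] [∀ p, Module ℝ (V p)] [∀ p, TopologicalSpace (V p)]
    [FiberBundle F V] [VectorBundle ℝ F V] [ContMDiffVectorBundle (⊤ : ℕ∞) F V I]
    (hk : 0 < Module.finrank ℝ F)
    {n : ℕ} (s : Fin n → ∀ p, V p)
    (hsmooth : ∀ i, ContMDiff I (I.prod 𝓘(ℝ, F)) (⊤ : ℕ∞)
      (fun p : M => (⟨p, s i p⟩ : Bundle.TotalSpace F V)))
    (hspan : ∀ p : M, Submodule.span ℝ (Set.range fun i => s i p) = ⊤)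
    (t : ∀ p, V p)
    (ht : ContMDiff I (I.prod 𝓘(ℝ, F)) (⊤ : ℕ∞) (fun p : M => (⟨p, t p⟩ : Bundle.TotalSpace F V))) :
    ∃ f : Fin n → M → ℝ, (∀ i, ContMDiff I 𝓘(ℝ, ℝ) (⊤ : ℕ∞) (f i)) ∧
      ∀ p : M, t p = ∑ i, f i p • s i p := by
  have : FiniteDimensional ℝ F := Module.finite_of_finrank_pos hk
  refine ⟨fun i p => minNormCoeff F s (t p) i, fun i x => ?_,
    fun p => (sum_minNormCoeff_smul (hspan p) (t p)).symm⟩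
  exact (EuclideanSpace.proj i).contMDiff.contMDiffAt.comp x
    (contMDiffAt_minNormCoeff (fun i => hsmooth i x) hspan (ht x))

theorem stmt19
    {EB : Type*} [NormedAddCommGroup EB] [NormedSpace ℝ EB]
    {HB : Type*} [TopologicalSpace HB] {I : ModelWithCorners ℝ EB HB}
    {M : Type*} [TopologicalSpace M] [ChartedSpace HB M] [IsManifold I (⊤ : ℕ∞) M]
    [T2Space M] [SigmaCompactSpace M]
    {F : Type*} [NormedAddCommGroup F] [NormedSpace ℝ F]
    {V : M → Type*} [TopologicalSpace (Bundle.TotalSpace F V)]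
    [∀ p, AddCommGroup (V p)] [∀ p, Module ℝ (V p)] [∀ p, TopologicalSpace (V p)]
    [FiberBundle F V] [VectorBundle ℝ F V] [ContMDiffVectorBundle (⊤ : ℕ∞) F V I]
    (hk : 0 < Module.finrank ℝ F)
    {n : ℕ} (s : Fin n → ∀ p, V p)
    (hsmooth : ∀ i, ContMDiff I (I.prod 𝓘(ℝ, F)) (⊤ : ℕ∞)
      (fun p : M => (⟨p, s i p⟩ : Bundle.TotalSpace F V)))
    (hspan : ∀ p : M, Submodule.span ℝ (Set.range fun i => s i p) = ⊤)
    (t : ∀ p, V p)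
    (ht : ContMDiff I (I.prod 𝓘(ℝ, F)) (⊤ : ℕ∞) (fun p : M => (⟨p, t p⟩ : Bundle.TotalSpace F V))) :
    ∃ f : Fin n → M → ℝ, (∀ i, ContMDiff I 𝓘(ℝ, ℝ) (⊤ : ℕ∞) (f i)) ∧
      ∀ p : M, t p = ∑ i, f i p • s i p :=
  stmt19_general hk s hsmooth hspan t ht
end
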